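/- arXiv:0912.3115 — 3 statements merged into one kernel-verified Lean document; each statement's English description precedes it below -/
import Mathlib

section
/- Let p be a prime, let 𝐤 be a perfect field of characteristic p, and let A be a local Artinian ring with maximal ideal m together with a ring isomorphism ρ from the residue field A/m to 𝐤. Then there exists a local ring homomorphism i : W(𝐤) → A from the ring of p-typical Witt vectors of 𝐤 such that the map induced on residue fields is the identity; concretely, for every Witt vector x ∈ W(𝐤) one has ρ(i(x) mod m) = x₀, where x₀ denotes the zeroth Witt coefficient of x (the image of x under the ring homomorphism W(𝐤) → 𝐤 given by truncation to length one). -/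
/-!
Let `r : A → 𝐤` be the residue map; its kernel `m` is nilpotent, say `m ^ N = 0`, and contains `p`.
The ghost component `w_n : W(A) → A` with `n = 2N` kills every Witt vector with coefficients in `m`:
in `w_n = ∑ pⁱ aᵢ^{p^{n-i}}` either `pⁱ ∈ m ^ N` or `p^{n-i} ≥ N`. Hence `w_n` factors through
`W(r) : W(A) ↠ W(𝐤)`, and since `𝐤` has characteristic `p` the factored map reduces to
`x ↦ x₀ ^ pⁿ` modulo `m`. Precomposing with `W(φ⁻ⁿ)`, `φ` the Frobenius of the perfect field `𝐤`,
gives the required lift of `x ↦ x₀`.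
-/

open IsLocalRing WittVector

namespace WittVector

variable {p : ℕ} [hp : Fact p.Prime] {A B : Type*} [CommRing A] [CommRing B]

local notation "𝕎" => WittVector p

theorem ghostComponent_eq_zero_of_forall_coeff_mem {I : Ideal A} {N n : ℕ} (hI : I ^ N = ⊥)
    (hpI : (p : A) ∈ I) (hn : 2 * N ≤ n) {y : 𝕎 A} (hy : ∀ j, y.coeff j ∈ I) :
    ghostComponent n y = 0 := by
  have pow_eq_zero {a : A} {m : ℕ} (ha : a ∈ I) (hm : N ≤ m) : a ^ m = 0 := by
    simpa [hI] using Ideal.pow_le_pow_right hm (Ideal.pow_mem_pow ha m)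
  rw [ghostComponent_apply, aeval_wittPolynomial]
  refine Finset.sum_eq_zero fun i _ => ?_
  rcases le_or_gt N i with hi | hi
  · rw [pow_eq_zero hpI hi, zero_mul]
  · have : N ≤ p ^ (n - i) := (show N ≤ n - i by omega).trans (Nat.lt_pow_self hp.out.one_lt).le
    rw [pow_eq_zero (hy i) this, mul_zero]

theorem ker_map_le_ker_ghostComponent {f : A →+* B} {N n : ℕ} (hN : RingHom.ker f ^ N = ⊥)
    (hpf : (p : A) ∈ RingHom.ker f) (hn : 2 * N ≤ n) :
    RingHom.ker (map (p := p) f) ≤ RingHom.ker (ghostComponent (p := p) n) := fun y hy =>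
  ghostComponent_eq_zero_of_forall_coeff_mem hN hpf hn fun j => by
    simpa [← map_coeff] using congrArg (coeff · j) hy

theorem map_ghostComponent (f : A →+* B) (n : ℕ) (y : 𝕎 A) :
    f (ghostComponent n y) = ghostComponent n (map f y) := by
  simp [ghostComponent_apply, aeval_wittPolynomial, map_coeff]

theorem ghostComponent_eq_coeff_zero_pow [CharP B p] (n : ℕ) (x : 𝕎 B) :
    ghostComponent n x = x.coeff 0 ^ p ^ n := by
  rw [ghostComponent_apply, aeval_wittPolynomial,
    Finset.sum_eq_single_of_mem 0 (Finset.mem_range.mpr n.succ_pos)]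
  · simp
  · intro i _ hi
    rw [CharP.cast_eq_zero, zero_pow hi, zero_mul]

theorem exists_ringHom_comp_eq_constantCoeff [CharP B p] [PerfectRing B p] (f : A →+* B)
    (hf : Function.Surjective f) (hker : IsNilpotent (RingHom.ker f)) :
    ∃ i : 𝕎 B →+* A, f.comp i = constantCoeff := by
  obtain ⟨N, hN⟩ := hker
  have hpf : (p : A) ∈ RingHom.ker f := by simp
  let g : 𝕎 B →+* A := (map f).liftOfSurjective (map_surjective f hf)
    ⟨ghostComponent (2 * N), ker_map_le_ker_ghostComponent hN hpf le_rfl⟩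
  have hg (x : 𝕎 B) : f (g x) = x.coeff 0 ^ p ^ (2 * N) := by
    obtain ⟨y, rfl⟩ := map_surjective f hf x
    rw [RingHom.liftOfSurjective_comp_apply, map_ghostComponent,
      ghostComponent_eq_coeff_zero_pow]
  let σ : B →+* B := (iterateFrobeniusEquiv B p (2 * N)).symm
  refine ⟨g.comp (map σ), RingHom.ext fun x => ?_⟩
  rw [RingHom.comp_apply, RingHom.comp_apply, hg, map_coeff, constantCoeff_apply]
  exact (iterateFrobeniusEquiv B p (2 * N)).apply_symm_apply _

theorem isLocalHom_constantCoeff {k : Type*} [Field k] [CharP k p] :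
    IsLocalHom (constantCoeff : 𝕎 k →+* k) :=
  ⟨fun x hx => isUnit_of_coeff_zero_ne_zero x hx.ne_zero⟩

end WittVector

/-- Lemma 4.3: a local Artinian ring with perfect residue field `𝐤` of characteristic `p`
receives a local homomorphism from the ring of `p`-typical Witt vectors of `𝐤` inducing
the identity on residue fields. -/
theorem stmt1 (p : ℕ) [Fact p.Prime] {k : Type*} [Field k] [CharP k p] [PerfectRing k p]
    {A : Type*} [CommRing A] [IsLocalRing A] [IsArtinianRing A]
    (ρ : IsLocalRing.ResidueField A ≃+* k) :
    ∃ i : WittVector p k →+* A, IsLocalHom i ∧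
      ∀ x : WittVector p k, ρ (IsLocalRing.residue A (i x)) = x.coeff 0 := by
  let r : A →+* k := ρ.toRingHom.comp (residue A)
  have hker : IsNilpotent (RingHom.ker r) := by
    rw [RingHom.ker_equiv_comp, ker_residue, ← jacobson_eq_maximalIdeal ⊥ bot_ne_top]
    exact IsArtinianRing.isNilpotent_jacobson_bot
  obtain ⟨i, hi⟩ :=
    exists_ringHom_comp_eq_constantCoeff r (ρ.surjective.comp residue_surjective) hker
  have : IsLocalHom (r.comp i) := hi ▸ isLocalHom_constantCoeff
  exact ⟨i, isLocalHom_of_comp i r, fun x => RingHom.congr_fun hi x⟩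
end

section
/- Let A be a local Artinian ring with maximal ideal m, and let f be a nonzero element of the ring A((t)) of formal Laurent series over A. Then f is a unit of A((t)) if and only if there exists an integer w such that the coefficient of t^w in f is a unit of A and the coefficient of t^i in f lies in m for every i < w. -/
/-!
Reducing a unit `f` modulo `𝔪` gives a unit, hence a nonzero series over the residue field, and
`w` is its order. Conversely, split `f` at `t^w`: the part of index `≥ w` has a unit leading
coefficient, so it is a unit over any coefficient ring, and the part of index `< w` has all its
coefficients in the nilpotent ideal `𝔪`, so it is nilpotent.
-/

open IsLocalRing

namespace HahnSeries

section Ideal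

variable {Γ R : Type*} [AddCommMonoid Γ] [PartialOrder Γ] [IsOrderedCancelAddMonoid Γ]
  [CommSemiring R]

theorem coeff_mul_mem_mul {I J : Ideal R} {x y : R⟦Γ⟧} (hx : ∀ a, x.coeff a ∈ I)
    (hy : ∀ a, y.coeff a ∈ J) (a : Γ) : (x * y).coeff a ∈ I * J := by
  rw [coeff_mul]
  exact Ideal.sum_mem _ fun ij _ ↦ Ideal.mul_mem_mul (hx ij.1) (hy ij.2)

theorem coeff_pow_mem_pow {I : Ideal R} {x : R⟦Γ⟧} (hx : ∀ a, x.coeff a ∈ I) (n : ℕ) (a : Γ) :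
    (x ^ n).coeff a ∈ I ^ n := by
  induction n generalizing a with
  | zero => simp
  | succ n ih => rw [pow_succ, pow_succ]; exact coeff_mul_mem_mul ih hx a

theorem isNilpotent_of_coeff_mem {I : Ideal R} (hI : IsNilpotent I) {x : R⟦Γ⟧}
    (hx : ∀ a, x.coeff a ∈ I) : IsNilpotent x := by
  obtain ⟨n, hn⟩ := hI
  refine ⟨n, ?_⟩
  ext a
  simpa [hn] using coeff_pow_mem_pow hx n a

end Ideal

section LinearOrder

variable {Γ : Type*} [AddCommMonoid Γ] [LinearOrder Γ] [IsOrderedCancelAddMonoid Γ]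

theorem isUnit_map_of_isUnit {R S : Type*} [CommRing R] [CommRing S] (f : R →+* S)
    {x : R⟦Γ⟧} (hx : IsUnit x) : IsUnit (x.map f) := by
  obtain ⟨u, rfl⟩ := hx
  refine .of_mul_eq_one ((↑u⁻¹ : R⟦Γ⟧).map f) ?_
  have h := HahnSeries.map_mul (Γ := Γ) (f : R →ₙ+* S) (x := u) (y := ↑u⁻¹)
  simp only [Units.mul_inv] at h
  exact h.symm.trans (HahnSeries.map_one f.toMonoidWithZeroHom)

theorem exists_isUnit_coeff_of_isUnit {A : Type*} [CommRing A] [IsLocalRing A] {x : A⟦Γ⟧}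
    (hx : IsUnit x) :
    ∃ w, IsUnit (x.coeff w) ∧ ∀ i < w, x.coeff i ∈ maximalIdeal A := by
  set y := x.map (residue A)
  have hy : y ≠ 0 := (isUnit_map_of_isUnit (residue A) hx).ne_zero
  obtain ⟨w, hw⟩ := WithTop.ne_top_iff_exists.mp (orderTop_ne_top.mpr hy)
  refine ⟨w, ?_, fun i hi ↦ ?_⟩
  · simpa [y, residue_ne_zero_iff_isUnit] using coeff_orderTop_ne hw.symm
  · have hyi : y.coeff i = 0 := coeff_eq_zero_of_lt_orderTop (hw ▸ WithTop.coe_lt_coe.mpr hi)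
    simpa [y] using hyi

end LinearOrder

section Group

variable {Γ R : Type*} [AddCommGroup Γ] [LinearOrder Γ] [IsOrderedAddMonoid Γ] [CommRing R]

theorem isUnit_of_isUnit_coeff_of_forall_lt_eq_zero {x : R⟦Γ⟧} {w : Γ} (hw : IsUnit (x.coeff w))
    (hlt : ∀ i < w, x.coeff i = 0) : IsUnit x := by
  nontriviality R
  have hx : x.orderTop = w := le_antisymm (orderTop_le_of_coeff_ne_zero hw.ne_zero)
    (le_orderTop_iff_forall.mpr fun i hi ↦ hlt i (WithTop.coe_lt_coe.mp hi))
  refine isUnit_of_isUnit_leadingCoeff_AddUnitOrder ?_ (AddGroup.isAddUnit _)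
  simpa [leadingCoeff, hx] using hw

theorem isUnit_of_isUnit_coeff_of_forall_lt_mem {I : Ideal R} (hI : IsNilpotent I) {x : R⟦Γ⟧}
    {w : Γ} (hw : IsUnit (x.coeff w)) (hlt : ∀ i < w, x.coeff i ∈ I) : IsUnit x := by
  have hx : x = (x - truncLT w x) + truncLT w x := (sub_add_cancel _ _).symm
  have hhead : IsNilpotent (truncLT w x) := isNilpotent_of_coeff_mem hI fun i ↦ by
    rw [HahnSeries.coeff_truncLT]
    split_ifs with hi
    exacts [hlt i hi, I.zero_mem]
  have htail : IsUnit (x - truncLT w x) :=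
    isUnit_of_isUnit_coeff_of_forall_lt_eq_zero (w := w) (by simpa using hw)
      fun i hi ↦ by simp [hi]
  rw [hx]
  exact hhead.isUnit_add_left_of_commute htail (Commute.all _ _)

end Group

end HahnSeries

theorem stmt4_general {A : Type*} [CommRing A] [IsLocalRing A] [IsArtinianRing A]
    (f : LaurentSeries A) :
    IsUnit f ↔ ∃ w : ℤ, IsUnit (f.coeff w) ∧
      ∀ i : ℤ, i < w → f.coeff i ∈ IsLocalRing.maximalIdeal A :=
  ⟨HahnSeries.exists_isUnit_coeff_of_isUnit, fun ⟨_, hw, hlt⟩ ↦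
    HahnSeries.isUnit_of_isUnit_coeff_of_forall_lt_mem
      ((isArtinianRing_iff_isNilpotent_maximalIdeal A).mp ‹_›) hw hlt⟩

/-- Characterization of the units of the ring of formal Laurent series over a local
Artinian ring: a nonzero `f` is a unit if and only if there is an integer `w` such that
the coefficient of `t^w` is a unit and all coefficients of lower index lie in the maximal
ideal (Definition 4.6 of the paper). -/
theorem stmt4 {A : Type*} [CommRing A] [IsLocalRing A] [IsArtinianRing A]
    (f : LaurentSeries A) (hf : f ≠ 0) :
    IsUnit f ↔ ∃ w : ℤ, IsUnit (f.coeff w) ∧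
      ∀ i : ℤ, i < w → f.coeff i ∈ IsLocalRing.maximalIdeal A :=
  stmt4_general f
end

section
/- Let A be a local Artinian ring with maximal ideal m. Then every unit f of the Laurent series ring A((t)) can be written in the form f = a₀ · t^w · u · h, where w ∈ ℤ, a₀ ∈ A^×, u ∈ A[[t]] is a power series with constant coefficient 1, and h = 1 + Σ_{i=1}^{N} cᵢ t^{-i} for some N ≥ 0 and elements c₁, …, c_N ∈ m; moreover the data (w, a₀, u, h) is uniquely determined by f, and conversely every product of this form is a unit of A((t)). The integer w is called the winding number w(f) of f. -/
/-!
The maximal ideal `m` of `A` is nilpotent, so a Laurent series with all coefficients in `m` is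
nilpotent. Hence a unit `f` has a unit coefficient, and `w` is the least index of one; all lower
coefficients lie in `m`. The series `g = t^{-w} f` has a unit constant coefficient and its
negative-degree coefficients in `m`, and `g = P · (1 + n)` with `P ∈ A[[t]]ˣ` and `n` a polar part
with coefficients in `m` is obtained by successive approximation along the `m`-adic filtration:
writing an error term `e ∈ m^j` as its power series part `E` plus its polar part `N`, the product
`(1 + E)(1 + N)` misses `1 + e` only by `N E ∈ m^{j+1}`. For uniqueness, if `P (1 + n)` has no
coefficients in nonnegative degrees, comparing coefficients shows that those of `P` lie in every
power of `m`, so `P = 0`.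
-/

/-- The Laurent series `a₀ · t^w · u · h`, where `u ∈ A[[t]]` and
`h = 1 + Σᵢ cᵢ t^{-(i+1)}` is a polynomial in `t⁻¹` with constant coefficient `1`
recorded by the finitely supported function `c`. -/
noncomputable def unitForm {A : Type*} [CommRing A] (w : ℤ) (a0 : Aˣ)
    (u : PowerSeries A) (c : ℕ →₀ A) : LaurentSeries A :=
  HahnSeries.single w (a0 : A) * (HahnSeries.ofPowerSeries ℤ A u) *
    (1 + c.sum fun i ci => HahnSeries.single (-((i : ℤ) + 1)) ci)

theorem IsNilpotent.isNilpotent_of_mem {R : Type*} [CommSemiring R] {I : Ideal R}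
    (hI : IsNilpotent I) {x : R} (hx : x ∈ I) : IsNilpotent x := by
  obtain ⟨k, hk⟩ := hI
  exact ⟨k, by rw [← Ideal.mem_bot, ← Ideal.zero_eq_bot, ← hk]; exact Ideal.pow_mem_pow hx k⟩

namespace HahnSeries

variable {Γ R : Type*} [PartialOrder Γ] [AddCommMonoid Γ] [IsOrderedCancelAddMonoid Γ]
  [CommSemiring R]

def coeffIdeal (I : Ideal R) : Ideal (HahnSeries Γ R) where
  carrier := {x | ∀ n, x.coeff n ∈ I}
  add_mem' hx hy n := by rw [coeff_add]; exact add_mem (hx n) (hy n)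
  zero_mem' _ := zero_mem I
  smul_mem' _ _ hx n := by
    rw [smul_eq_mul, coeff_mul]
    exact sum_mem fun _ _ => I.mul_mem_left _ (hx _)

variable {I J : Ideal R} {x y : HahnSeries Γ R}

theorem mem_coeffIdeal : x ∈ coeffIdeal I ↔ ∀ n, x.coeff n ∈ I := Iff.rfl

theorem coeffIdeal_mono (h : I ≤ J) : (coeffIdeal I : Ideal (HahnSeries Γ R)) ≤ coeffIdeal J :=
  fun _ hx n => h (hx n)

theorem coeffIdeal_top : (coeffIdeal ⊤ : Ideal (HahnSeries Γ R)) = ⊤ :=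
  eq_top_iff.2 fun _ _ _ => Submodule.mem_top

theorem coeffIdeal_bot : (coeffIdeal ⊥ : Ideal (HahnSeries Γ R)) = ⊥ :=
  eq_bot_iff.2 fun _ hx => (Ideal.mem_bot).2 <| HahnSeries.ext <| funext fun n => hx n

theorem mul_mem_coeffIdeal_mul (hx : x ∈ coeffIdeal I) (hy : y ∈ coeffIdeal J) :
    x * y ∈ coeffIdeal (I * J) := fun n => by
  rw [coeff_mul]
  exact sum_mem fun _ _ => Ideal.mul_mem_mul (hx _) (hy _)

theorem coeffIdeal_mul_le :
    coeffIdeal I * coeffIdeal J ≤ (coeffIdeal (I * J) : Ideal (HahnSeries Γ R)) :=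
  Ideal.mul_le.2 fun _ hx _ hy => mul_mem_coeffIdeal_mul hx hy

theorem coeffIdeal_pow_le (k : ℕ) :
    coeffIdeal I ^ k ≤ (coeffIdeal (I ^ k) : Ideal (HahnSeries Γ R)) := by
  induction k with
  | zero => rw [pow_zero, pow_zero, Ideal.one_eq_top, Ideal.one_eq_top, coeffIdeal_top]
  | succ k ih =>
    rw [pow_succ, pow_succ]
    exact (Ideal.mul_mono_left ih).trans coeffIdeal_mul_le

theorem isNilpotent_coeffIdeal (hI : IsNilpotent I) :
    IsNilpotent (coeffIdeal I : Ideal (HahnSeries Γ R)) := by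
  obtain ⟨k, hk⟩ := hI
  refine ⟨k, eq_bot_iff.2 <| (coeffIdeal_pow_le k).trans_eq ?_⟩
  rw [hk, Ideal.zero_eq_bot, coeffIdeal_bot]

end HahnSeries

namespace LaurentSeries

open scoped PowerSeries
open HahnSeries (coeffIdeal mem_coeffIdeal coeffIdeal_top coeffIdeal_bot coeffIdeal_mono
  mul_mem_coeffIdeal_mul isNilpotent_coeffIdeal)

variable {A : Type*} [CommRing A] {I : Ideal A}

variable (A) in
def negSupported : NonUnitalSubring A⸨X⸩ where
  carrier := {x | ∀ i, 0 ≤ i → x.coeff i = 0}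
  add_mem' hx hy i hi := by rw [HahnSeries.coeff_add, hx i hi, hy i hi, add_zero]
  zero_mem' _ _ := rfl
  neg_mem' hx i hi := by rw [HahnSeries.coeff_neg, hx i hi, neg_zero]
  mul_mem' hx hy i hi := by
    rw [HahnSeries.coeff_mul]
    refine Finset.sum_eq_zero fun ab hab => ?_
    rw [Finset.mem_antidiagonal] at hab
    rcases le_or_gt 0 ab.1 with ha | ha
    · rw [hx _ ha, zero_mul]
    · rw [hy _ (by omega), mul_zero]

def nonnegPart (x : A⸨X⸩) : A⟦X⟧ := PowerSeries.mk fun n => x.coeff n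

theorem constantCoeff_nonnegPart (x : A⸨X⸩) :
    PowerSeries.constantCoeff x.nonnegPart = x.coeff 0 :=
  rfl

theorem coeff_coe_nonnegPart (x : A⸨X⸩) (i : ℤ) :
    (x.nonnegPart : A⸨X⸩).coeff i = if i < 0 then 0 else x.coeff i := by
  rw [PowerSeries.coeff_coe]
  split_ifs with hi
  · rfl
  · rw [nonnegPart, PowerSeries.coeff_mk, Int.natAbs_of_nonneg (not_lt.1 hi)]

theorem coeff_sub_nonnegPart (x : A⸨X⸩) (i : ℤ) :
    (x - x.nonnegPart).coeff i = if i < 0 then x.coeff i else 0 := by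
  rw [HahnSeries.coeff_sub, coeff_coe_nonnegPart]
  split_ifs <;> simp

theorem sub_nonnegPart_mem_negSupported (x : A⸨X⸩) : x - x.nonnegPart ∈ negSupported A :=
  fun i hi => by rw [coeff_sub_nonnegPart, if_neg (not_lt.2 hi)]

theorem coe_nonnegPart_mem_coeffIdeal {x : A⸨X⸩} (hx : x ∈ coeffIdeal I) :
    (x.nonnegPart : A⸨X⸩) ∈ coeffIdeal I := fun i => by
  rw [coeff_coe_nonnegPart]
  split_ifs
  exacts [zero_mem I, hx i]

noncomputable def ofNegCoeffs (c : ℕ →₀ A) : A⸨X⸩ :=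
  c.sum fun i ci => HahnSeries.single (-((i : ℤ) + 1)) ci

theorem coeff_ofNegCoeffs (c : ℕ →₀ A) (n : ℤ) :
    (ofNegCoeffs c).coeff n = if n < 0 then c (-(n + 1)).toNat else 0 := by
  rw [ofNegCoeffs, ← HahnSeries.coeff.addMonoidHom_apply, map_finsuppSum]
  simp only [HahnSeries.coeff.addMonoidHom_apply, HahnSeries.coeff_single]
  split_ifs with hn
  · have hiff : ∀ i : ℕ, n = -((i : ℤ) + 1) ↔ i = (-(n + 1)).toNat := fun i => by omega
    simp only [hiff]
    exact Finsupp.sum_ite_self_eq' c _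
  · exact Finset.sum_eq_zero fun i _ => if_neg (by omega)

theorem ofNegCoeffs_mem_negSupported (c : ℕ →₀ A) : ofNegCoeffs c ∈ negSupported A :=
  fun i hi => by rw [coeff_ofNegCoeffs, if_neg (not_lt.2 hi)]

theorem coeff_ofNegCoeffs_neg (c : ℕ →₀ A) (k : ℕ) :
    (ofNegCoeffs c).coeff (-((k : ℤ) + 1)) = c k := by
  rw [coeff_ofNegCoeffs, if_pos (by omega)]
  congr
  omega

theorem ofNegCoeffs_injective : Function.Injective (ofNegCoeffs (A := A)) := fun c c' h =>
  Finsupp.ext fun k => by rw [← coeff_ofNegCoeffs_neg, h, coeff_ofNegCoeffs_neg]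

theorem ofNegCoeffs_mem_coeffIdeal_iff {c : ℕ →₀ A} :
    ofNegCoeffs c ∈ coeffIdeal I ↔ ∀ k, c k ∈ I := by
  refine ⟨fun h k => coeff_ofNegCoeffs_neg c k ▸ h _, fun h n => ?_⟩
  rw [coeff_ofNegCoeffs]
  split_ifs
  exacts [h _, zero_mem I]

theorem exists_ofNegCoeffs_eq {x : A⸨X⸩} (hx : x ∈ negSupported A) :
    ∃ c, ofNegCoeffs c = x := by
  have hfin : (Function.support fun k : ℕ => x.coeff (-((k : ℤ) + 1))).Finite := by
    refine (Set.finite_Iio (-x.order).toNat).subset fun k hk => ?_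
    have := HahnSeries.order_le_of_coeff_ne_zero hk
    simp only [Set.mem_Iio]
    omega
  refine ⟨Finsupp.ofSupportFinite _ hfin, HahnSeries.ext (funext fun n => ?_)⟩
  rw [coeff_ofNegCoeffs]
  split_ifs with hn
  · rw [Finsupp.ofSupportFinite_coe]
    congr
    omega
  · exact (hx n (not_lt.1 hn)).symm

theorem exists_one_add_eq_coe_mul_one_add_of_mem_coeffIdeal_pow (s j : ℕ)
    (hj : I ^ (j + s) = ⊥) {e : A⸨X⸩} (he : e ∈ coeffIdeal I) (hej : e ∈ coeffIdeal (I ^ j)) :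
    ∃ P : A⟦X⟧, IsUnit P ∧ ∃ n ∈ negSupported A, n ∈ coeffIdeal I ∧
      1 + e = (P : A⸨X⸩) * (1 + n) := by
  induction s generalizing j e with
  | zero =>
    have he0 : e = 0 := by rwa [← Ideal.mem_bot, ← coeffIdeal_bot, ← hj]
    exact ⟨1, isUnit_one, 0, zero_mem _, zero_mem _, by simp [he0]⟩
  | succ s ih =>
    have hI : IsNilpotent I := ⟨j + (s + 1), by rw [hj, Ideal.zero_eq_bot]⟩
    set E : A⟦X⟧ := e.nonnegPart
    set N : A⸨X⸩ := e - E with hN_def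
    have hE : (E : A⸨X⸩) ∈ coeffIdeal I := coe_nonnegPart_mem_coeffIdeal he
    have hN : N ∈ coeffIdeal I := sub_mem he hE
    have hNj : N ∈ coeffIdeal (I ^ j) := sub_mem hej (coe_nonnegPart_mem_coeffIdeal hej)
    have hE_unit : IsUnit (1 + E) := by
      rw [PowerSeries.isUnit_iff_constantCoeff, map_add, map_one, constantCoeff_nonnegPart]
      exact (hI.isNilpotent_of_mem (he 0)).isUnit_one_add
    have hN_unit : IsUnit (1 + N) :=
      ((isNilpotent_coeffIdeal hI).isNilpotent_of_mem hN).isUnit_one_add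
    obtain ⟨V, hV⟩ :=
      (hN_unit.mul (hE_unit.map (HahnSeries.ofPowerSeries ℤ A))).exists_right_inv
    rw [map_add, map_one] at hV
    -- `(1 + N) * (1 + E) = 1 + e + N * E` with `N * E` one power of `I` deeper; `δ` absorbs it.
    set δ : A⸨X⸩ := -(V * (N * E))
    have hδ : δ ∈ coeffIdeal (I ^ (j + 1)) :=
      neg_mem (Ideal.mul_mem_left _ _ (pow_succ I j ▸ mul_mem_coeffIdeal_mul hNj hE))
    obtain ⟨P, hP, n, hn, hnI, hδ_eq⟩ := ih (j + 1) (by rwa [add_right_comm])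
      (coeffIdeal_mono (Ideal.pow_le_self j.succ_ne_zero) hδ) hδ
    refine ⟨(1 + E) * P, hE_unit.mul hP, N + n + N * n,
      add_mem (add_mem (sub_nonnegPart_mem_negSupported e) hn) (mul_mem
        (sub_nonnegPart_mem_negSupported e) hn),
      add_mem (add_mem hN hnI) (Ideal.mul_mem_left _ _ hnI), ?_⟩
    calc 1 + e = (1 + E) * (1 + N) * (1 + δ) := by linear_combination (N * E) * hV - hN_def
      _ = _ := by rw [hδ_eq]; push_cast; ring

theorem exists_one_add_eq_coe_mul_one_add (hI : IsNilpotent I) {e : A⸨X⸩}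
    (he : e ∈ coeffIdeal I) :
    ∃ P : A⟦X⟧, IsUnit P ∧ ∃ n ∈ negSupported A, n ∈ coeffIdeal I ∧
      1 + e = (P : A⸨X⸩) * (1 + n) := by
  obtain ⟨k, hk⟩ := hI
  refine exists_one_add_eq_coe_mul_one_add_of_mem_coeffIdeal_pow k 0
    (by rw [zero_add, hk, Ideal.zero_eq_bot]) he ?_
  rw [pow_zero, Ideal.one_eq_top, coeffIdeal_top]
  exact Submodule.mem_top

theorem exists_eq_coe_mul_one_add (hI : IsNilpotent I) {g : A⸨X⸩} (h0 : IsUnit (g.coeff 0))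
    (hneg : ∀ i < 0, g.coeff i ∈ I) :
    ∃ P : A⟦X⟧, IsUnit P ∧ ∃ n ∈ negSupported A, n ∈ coeffIdeal I ∧
      g = (P : A⸨X⸩) * (1 + n) := by
  obtain ⟨U, hU⟩ : IsUnit g.nonnegPart := by
    rwa [PowerSeries.isUnit_iff_constantCoeff, constantCoeff_nonnegPart]
  have hinv : ((U : A⟦X⟧) : A⸨X⸩) * ((↑U⁻¹ : A⟦X⟧) : A⸨X⸩) = 1 := by
    rw [← PowerSeries.coe_mul, U.mul_inv, PowerSeries.coe_one]
  have hN : g - g.nonnegPart ∈ coeffIdeal I := fun i => by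
    rw [coeff_sub_nonnegPart]
    split_ifs with hi
    exacts [hneg i hi, zero_mem I]
  obtain ⟨P, hP, n, hn, hnI, heq⟩ :=
    exists_one_add_eq_coe_mul_one_add hI (Ideal.mul_mem_left _ ((↑U⁻¹ : A⟦X⟧) : A⸨X⸩) hN)
  refine ⟨U * P, U.isUnit.mul hP, n, hn, hnI, ?_⟩
  rw [hU] at hinv
  rw [PowerSeries.coe_mul, mul_assoc, ← heq, hU]
  linear_combination (-(g - g.nonnegPart)) * hinv

theorem eq_zero_of_coe_mul_one_add_mem_negSupported (hI : IsNilpotent I) {d : A⟦X⟧}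
    {n : A⸨X⸩} (hn : n ∈ coeffIdeal I) (h : (d : A⸨X⸩) * (1 + n) ∈ negSupported A) : d = 0 := by
  have hd : ∀ j, (d : A⸨X⸩) ∈ coeffIdeal (I ^ j) := by
    intro j
    induction j with
    | zero =>
      rw [pow_zero, Ideal.one_eq_top, coeffIdeal_top]
      exact Submodule.mem_top
    | succ j ih =>
      intro i
      rcases lt_or_ge i 0 with hi | hi
      · rw [PowerSeries.coeff_coe, if_pos hi]
        exact zero_mem _
      · have hcoeff := h i hi
        rw [mul_one_add, HahnSeries.coeff_add] at hcoeff
        rw [eq_neg_of_add_eq_zero_left hcoeff, pow_succ]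
        exact neg_mem (mul_mem_coeffIdeal_mul ih hn i)
  obtain ⟨k, hk⟩ := hI
  have hd0 := hd k
  rw [hk, Ideal.zero_eq_bot, coeffIdeal_bot, Ideal.mem_bot] at hd0
  exact HahnSeries.ofPowerSeries_injective (hd0.trans (map_zero _).symm)

theorem eq_of_coe_mul_one_add_eq (hI : IsNilpotent I) {P Q : A⟦X⟧} (hQ : IsUnit Q)
    {n n' : A⸨X⸩} (hn : n ∈ negSupported A) (hnI : n ∈ coeffIdeal I) (hn' : n' ∈ negSupported A)
    (h : (P : A⸨X⸩) * (1 + n) = Q * (1 + n')) : P = Q ∧ n = n' := by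
  obtain ⟨U, rfl⟩ := hQ
  have hinv : ((↑U⁻¹ : A⟦X⟧) : A⸨X⸩) * ((U : A⟦X⟧) : A⸨X⸩) = 1 := by
    rw [← PowerSeries.coe_mul, U.inv_mul, PowerSeries.coe_one]
  have hd : ((↑U⁻¹ * P - 1 : A⟦X⟧) : A⸨X⸩) * (1 + n) = n' - n := by
    push_cast
    linear_combination ((↑U⁻¹ : A⟦X⟧) : A⸨X⸩) * h + (1 + n') * hinv
  have hd0 := eq_zero_of_coe_mul_one_add_mem_negSupported hI hnI (hd ▸ sub_mem hn' hn)
  rw [hd0, PowerSeries.coe_zero, zero_mul, eq_comm, sub_eq_zero] at hd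
  exact ⟨(Units.inv_mul_eq_one.1 (sub_eq_zero.1 hd0)).symm, hd.symm⟩

theorem isUnit_single {w : ℤ} {a : A} (ha : IsUnit a) :
    IsUnit (HahnSeries.single w a : A⸨X⸩) := by
  obtain ⟨a, rfl⟩ := ha
  refine IsUnit.of_mul_eq_one (HahnSeries.single (-w) (↑a⁻¹ : A)) ?_
  rw [HahnSeries.single_mul_single, add_neg_cancel, a.mul_inv, HahnSeries.single_zero_one]

theorem coeff_single_one_mul (w i : ℤ) (g : A⸨X⸩) :
    (HahnSeries.single w (1 : A) * g).coeff i = g.coeff (i - w) := by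
  conv_lhs => rw [← sub_add_cancel i w]
  rw [HahnSeries.coeff_single_mul_add, one_mul]

section IsLocalRing

open IsLocalRing

variable [IsLocalRing A]

-- Since the non-units of `A` form its maximal ideal, `w` is the least index of a unit coefficient.
def IsWindingNumber (f : A⸨X⸩) (w : ℤ) : Prop :=
  IsUnit (f.coeff w) ∧ ∀ i < w, f.coeff i ∈ maximalIdeal A

theorem IsWindingNumber.unique {f : A⸨X⸩} {w w' : ℤ} (h : IsWindingNumber f w)
    (h' : IsWindingNumber f w') : w = w' := by
  by_contra hne
  rcases lt_or_gt_of_ne hne with hlt | hlt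
  · exact notMem_maximalIdeal.2 h.1 (h'.2 w hlt)
  · exact notMem_maximalIdeal.2 h'.1 (h.2 w' hlt)

theorem isWindingNumber_single_one_mul_iff {g : A⸨X⸩} {w k : ℤ} :
    IsWindingNumber (HahnSeries.single w 1 * g) (k + w) ↔ IsWindingNumber g k := by
  simp only [IsWindingNumber, coeff_single_one_mul, add_sub_cancel_right]
  refine and_congr_right' ⟨fun h i hi => ?_, fun h i hi => h _ (by omega)⟩
  simpa using h (i + w) (by omega)

theorem exists_isWindingNumber (hA : IsNilpotent (maximalIdeal A)) {f : A⸨X⸩} (hf : IsUnit f) :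
    ∃ w, IsWindingNumber f w := by
  classical
  have hunit : ∃ i, IsUnit (f.coeff i) := by
    by_contra! h
    exact hf.not_isNilpotent <| (isNilpotent_coeffIdeal hA).isNilpotent_of_mem
      (mem_coeffIdeal.2 fun i => (mem_maximalIdeal _).2 (h i))
  obtain ⟨w, hw, hmin⟩ := Int.exists_least_of_bdd
    ⟨f.order, fun i hi => HahnSeries.order_le_of_coeff_ne_zero hi.ne_zero⟩ hunit
  exact ⟨w, hw, fun i hi => (mem_maximalIdeal _).2 fun hu => (hmin i hu).not_gt hi⟩

theorem isWindingNumber_coe_mul_one_add {P : A⟦X⟧} (hP : IsUnit P) {n : A⸨X⸩}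
    (hn : n ∈ coeffIdeal (maximalIdeal A)) :
    IsWindingNumber ((P : A⸨X⸩) * (1 + n)) 0 := by
  have hPn : (P : A⸨X⸩) * n ∈ coeffIdeal (maximalIdeal A) := Ideal.mul_mem_left _ _ hn
  simp only [IsWindingNumber, mul_one_add, HahnSeries.coeff_add, PowerSeries.coeff_coe]
  refine ⟨?_, fun i hi => by simpa [if_pos hi] using hPn i⟩
  rw [if_neg (lt_irrefl 0), Int.natAbs_zero, PowerSeries.coeff_zero_eq_constantCoeff_apply]
  have hP0 := PowerSeries.isUnit_iff_constantCoeff.1 hP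
  refine (isUnit_or_isUnit_of_isUnit_add (b := -((P : A⸨X⸩) * n).coeff 0) ?_).resolve_right
    fun h => notMem_maximalIdeal.2 h (neg_mem (hPn 0))
  rwa [add_neg_cancel_right]

end IsLocalRing

end LaurentSeries

section unitForm

open LaurentSeries IsLocalRing
open scoped PowerSeries
open HahnSeries (coeffIdeal isNilpotent_coeffIdeal)

variable {A : Type*} [CommRing A]

theorem unitForm_eq_single_one_mul (w : ℤ) (a : Aˣ) (u : A⟦X⟧) (c : ℕ →₀ A) :
    unitForm w a u c = HahnSeries.single w 1 *
      (((PowerSeries.C (a : A) * u : A⟦X⟧) : A⸨X⸩) * (1 + ofNegCoeffs c)) := by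
  have hC : ((PowerSeries.C (a : A) : A⟦X⟧) : A⸨X⸩) = HahnSeries.single 0 (a : A) :=
    PowerSeries.coe_C _
  rw [PowerSeries.coe_mul, hC, ← mul_assoc, ← mul_assoc, HahnSeries.single_mul_single, add_zero,
    one_mul]
  rfl

theorem isUnit_unitForm {I : Ideal A} (hI : IsNilpotent I) (w : ℤ) (a : Aˣ) {u : A⟦X⟧}
    {c : ℕ →₀ A} (hu : IsUnit (PowerSeries.constantCoeff u)) (hc : ∀ i, c i ∈ I) :
    IsUnit (unitForm w a u c) :=
  ((isUnit_single a.isUnit).mul ((PowerSeries.isUnit_iff_constantCoeff.2 hu).map _)).mul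
    ((isNilpotent_coeffIdeal hI).isNilpotent_of_mem
      (ofNegCoeffs_mem_coeffIdeal_iff.2 hc)).isUnit_one_add

variable [IsLocalRing A]

theorem isWindingNumber_unitForm (w : ℤ) (a : Aˣ) {u : A⟦X⟧} {c : ℕ →₀ A}
    (hu : IsUnit (PowerSeries.constantCoeff u))
    (hc : ∀ i, c i ∈ maximalIdeal A) : IsWindingNumber (unitForm w a u c) w := by
  have hau : IsUnit (PowerSeries.C (a : A) * u) :=
    (a.isUnit.map _).mul (PowerSeries.isUnit_iff_constantCoeff.2 hu)
  have h := (isWindingNumber_single_one_mul_iff (w := w) (k := 0)).2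
    (isWindingNumber_coe_mul_one_add hau (ofNegCoeffs_mem_coeffIdeal_iff.2 hc))
  rwa [zero_add, ← unitForm_eq_single_one_mul] at h

theorem unitForm_injective (hA : IsNilpotent (maximalIdeal A)) {w w' : ℤ} {a a' : Aˣ}
    {u u' : A⟦X⟧} {c c' : ℕ →₀ A} (hu : PowerSeries.constantCoeff u = 1)
    (hc : ∀ i, c i ∈ maximalIdeal A) (hu' : PowerSeries.constantCoeff u' = 1)
    (hc' : ∀ i, c' i ∈ maximalIdeal A) (h : unitForm w a u c = unitForm w' a' u' c') :
    (w, a, u, c) = (w', a', u', c') := by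
  have hw : w = w' := (isWindingNumber_unitForm w a (hu ▸ isUnit_one) hc).unique
    (h ▸ isWindingNumber_unitForm w' a' (hu' ▸ isUnit_one) hc')
  subst hw
  rw [unitForm_eq_single_one_mul, unitForm_eq_single_one_mul] at h
  have hau' : IsUnit (PowerSeries.C (a' : A) * u') :=
    (a'.isUnit.map _).mul (PowerSeries.isUnit_iff_constantCoeff.2 (hu' ▸ isUnit_one))
  obtain ⟨hP, hn⟩ := eq_of_coe_mul_one_add_eq hA hau' (ofNegCoeffs_mem_negSupported c)
    (ofNegCoeffs_mem_coeffIdeal_iff.2 hc) (ofNegCoeffs_mem_negSupported c')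
    ((isUnit_single isUnit_one).mul_left_cancel h)
  have ha : a = a' := Units.ext <| by
    simpa [hu, hu'] using congrArg PowerSeries.constantCoeff hP
  subst ha
  rw [(a.isUnit.map PowerSeries.C).mul_left_cancel hP, ofNegCoeffs_injective hn]

theorem exists_eq_unitForm (hA : IsNilpotent (maximalIdeal A)) {f : A⸨X⸩} (hf : IsUnit f) :
    ∃ w a u c, PowerSeries.constantCoeff u = 1 ∧ (∀ i, c i ∈ maximalIdeal A) ∧
      f = unitForm w a u c := by
  obtain ⟨w, hw⟩ := exists_isWindingNumber hA hf
  set g := HahnSeries.single (-w) (1 : A) * f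
  have hfg : f = HahnSeries.single w 1 * g := by
    rw [← mul_assoc, HahnSeries.single_mul_single, add_neg_cancel, one_mul,
      HahnSeries.single_zero_one, one_mul]
  have hg : IsWindingNumber g 0 :=
    isWindingNumber_single_one_mul_iff.1 (by rwa [zero_add, ← hfg])
  obtain ⟨P, hP, n, hn, hnI, hgP⟩ := exists_eq_coe_mul_one_add hA hg.1 hg.2
  obtain ⟨c, rfl⟩ := exists_ofNegCoeffs_eq hn
  obtain ⟨a, ha⟩ := PowerSeries.isUnit_iff_constantCoeff.1 hP
  refine ⟨w, a, PowerSeries.C (↑a⁻¹ : A) * P, c, ?_, ofNegCoeffs_mem_coeffIdeal_iff.1 hnI, ?_⟩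
  · rw [map_mul, PowerSeries.constantCoeff_C, ← ha, a.inv_mul]
  · rw [unitForm_eq_single_one_mul, ← mul_assoc (PowerSeries.C (a : A)), ← map_mul, a.mul_inv,
      map_one (PowerSeries.C (R := A)), one_mul, hfg, hgP]

end unitForm

/-- Definition 4.6 of the paper: over a local Artinian ring `A`, every unit of `A((t))`
factors uniquely as `a₀ · t^w · u · h` with `w ∈ ℤ`, `a₀ ∈ A^×`, `u ∈ A[[t]]` with
constant coefficient `1`, and `h = 1 + Σ_{i=1}^{N} cᵢ t^{-i}` with all `cᵢ` in the
maximal ideal; conversely, every such product is a unit of `A((t))`. The integer `w` is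
the winding number of the unit. -/
theorem stmt5 {A : Type*} [CommRing A] [IsLocalRing A] [IsArtinianRing A] :
    (∀ f : LaurentSeries A, IsUnit f →
      ∃! q : ℤ × Aˣ × PowerSeries A × (ℕ →₀ A),
        (PowerSeries.constantCoeff q.2.2.1 = 1 ∧
          ∀ i, q.2.2.2 i ∈ IsLocalRing.maximalIdeal A) ∧
        f = unitForm q.1 q.2.1 q.2.2.1 q.2.2.2) ∧
    (∀ (w : ℤ) (a0 : Aˣ) (u : PowerSeries A) (c : ℕ →₀ A),
      PowerSeries.constantCoeff u = 1 →
      (∀ i, c i ∈ IsLocalRing.maximalIdeal A) →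
      IsUnit (unitForm w a0 u c)) := by
  have hA : IsNilpotent (IsLocalRing.maximalIdeal A) := by
    rw [← IsLocalRing.jacobson_eq_maximalIdeal ⊥ bot_ne_top]
    exact IsArtinianRing.isNilpotent_jacobson_bot
  refine ⟨fun f hf => ?_, fun w a u c hu hc => isUnit_unitForm hA w a (hu ▸ isUnit_one) hc⟩
  obtain ⟨w, a, u, c, hu, hc, rfl⟩ := exists_eq_unitForm hA hf
  exact ⟨(w, a, u, c), ⟨⟨hu, hc⟩, rfl⟩,
    fun q hq => (unitForm_injective hA hu hc hq.1.1 hq.1.2 hq.2).symm⟩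
end
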